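/- Data-dependent mutual information generalization bound: with $S \sim \mathcal{D}^n$ i.i.d., $J \subseteq [n]$ a uniformly random subset of size $m$ independent of $(S, W)$, and $\ell(Z,w)$ $\sigma$-subgaussian for each $w$, one has $\mathbb{E}[R_{\mathcal{D}}(W) - \hat{R}_S(W)] \le \sqrt{\frac{2\sigma^2}{n-m} I(W; S_{J^c})}$, where $S_{J^c}$ denotes the $n-m$ data points with indices outside $J$. -/

import Mathlib

open MeasureTheory ProbabilityTheory Real Classical

/-- The Kullback–Leibler divergence `KL(Q‖P) = ∫ log(dQ/dP) dQ` when `Q ≪ P` (and the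
log-likelihood ratio is integrable), and `+∞` otherwise. -/
noncomputable def klDiv {α : Type*} [MeasurableSpace α] (μ ν : Measure α) : EReal :=
  if μ ≪ ν ∧ Integrable (llr μ ν) μ then ((∫ x, llr μ ν x ∂μ : ℝ) : EReal) else ⊤

instance {α : Type*} : MeasurableSpace (Finset α) := ⊤

/-!
Write `Q` for the joint law of `(W, S_{Jᶜ})` and `P` for the product of its marginals. The
subsample `S_{Jᶜ}` is i.i.d. `D`, so under `P` the generalization gap
`f (w, s) = R_D(w) - R̂_s(w)` on the subsample is `σ² / (n - m)`-sub-Gaussian, and the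
Donsker–Varadhan inequality `t 𝔼_Q f ≤ KL(Q‖P) + log 𝔼_P exp (t f)`, optimized over `t > 0`,
gives `𝔼_Q f ≤ √(2 σ² / (n - m) · KL(Q‖P))`. Finally `𝔼_Q f` is the expected generalization gap:
averaged over the uniform subset `J`, which is independent of `(S, W)`, the empirical risk of
the subsample `S_{Jᶜ}` is the empirical risk of the whole sample.
-/

open scoped NNReal

open InformationTheory in
lemma mul_abs_le_klFun_add_exp_add_exp_neg {r : ℝ} (hr : 0 ≤ r) (t : ℝ) :
    r * |t| ≤ klFun r + (exp t + exp (-t)) := by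
  have hexp_abs : exp |t| ≤ exp t + exp (-t) := by
    rcases abs_cases t with ⟨h, _⟩ | ⟨h, _⟩ <;> rw [h] <;> linarith [exp_pos t, exp_pos (-t)]
  rcases hr.eq_or_lt with rfl | hr
  · simp only [zero_mul, klFun_zero]; positivity
  -- Fenchel–Young inequality for the conjugate pair `x log x - x` and `exp`
  have hyoung : r * (|t| - log r + 1) ≤ exp |t| := by
    calc r * (|t| - log r + 1) ≤ r * exp (|t| - log r) := by gcongr; exact add_one_le_exp _
      _ = exp |t| := by rw [exp_sub, exp_log hr]; field_simp
  rw [klFun_apply]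
  nlinarith

open InformationTheory in
lemma integrable_of_integrable_llr_of_integrable_exp {α : Type*} [MeasurableSpace α]
    {Q P : Measure α} [IsFiniteMeasure Q] [IsFiniteMeasure P] {f : α → ℝ}
    (hQP : Q ≪ P) (hllr : Integrable (llr Q P) Q) (hf : AEStronglyMeasurable f P)
    (hexp : Integrable (fun x => exp (f x)) P) (hexp_neg : Integrable (fun x => exp (-f x)) P) :
    Integrable f Q := by
  rw [← integrable_rnDeriv_smul_iff hQP]
  refine Integrable.mono' (((integrable_klFun_rnDeriv_iff hQP).2 hllr).add (hexp.add hexp_neg))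
    ((Measure.measurable_rnDeriv Q P).ennreal_toReal.aestronglyMeasurable.smul hf)
    (ae_of_all _ fun x => ?_)
  rw [norm_smul, Real.norm_of_nonneg ENNReal.toReal_nonneg, Real.norm_eq_abs]
  exact mul_abs_le_klFun_add_exp_add_exp_neg ENNReal.toReal_nonneg (f x)

open InformationTheory in
/-- The **Donsker–Varadhan** inequality. -/
lemma integral_le_integral_llr_add_log_integral_exp {α : Type*} [MeasurableSpace α]
    {Q P : Measure α} [IsProbabilityMeasure Q] [IsProbabilityMeasure P] {g : α → ℝ}
    (hQP : Q ≪ P) (hllr : Integrable (llr Q P) Q) (hgQ : Integrable g Q)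
    (hexp : Integrable (fun x => exp (g x)) P) :
    ∫ x, g x ∂Q ≤ ∫ x, llr Q P x ∂Q + log (∫ x, exp (g x) ∂P) := by
  have := isProbabilityMeasure_tilted hexp
  -- Gibbs' inequality for `Q` against the tilted measure `P.tilted g`
  have hgibbs := integral_llr_add_sub_measure_univ_nonneg
    (hQP.trans (absolutelyContinuous_tilted hexp)) (integrable_llr_tilted_right hQP hgQ hllr hexp)
  rw [integral_llr_tilted_right hQP hgQ hexp hllr] at hgibbs
  simp only [probReal_univ] at hgibbs
  linarith

lemma le_sqrt_of_forall_mul_le_add_sq {a b K : ℝ} (hb : 0 ≤ b)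
    (h : ∀ t, 0 < t → t * a ≤ K + b * t ^ 2 / 2) : a ≤ √(2 * b * K) := by
  rcases le_or_gt a 0 with ha | ha
  · exact ha.trans (sqrt_nonneg _)
  rcases hb.eq_or_lt with rfl | hb
  · have := h ((|K| + 1) / a) (by positivity)
    rw [div_mul_cancel₀ _ ha.ne'] at this
    linarith [le_abs_self K]
  · have := h (a / b) (by positivity)
    refine le_sqrt_of_sq_le ?_
    field_simp at this
    nlinarith

lemma klDiv_le_coe_iff {α : Type*} [MeasurableSpace α] {μ ν : Measure α} {M : ℝ} :
    klDiv μ ν ≤ M ↔ μ ≪ ν ∧ Integrable (llr μ ν) μ ∧ ∫ x, llr μ ν x ∂μ ≤ M := by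
  unfold klDiv
  split_ifs with h
  · simp [h]
  · simp only [top_le_iff, EReal.coe_ne_top, false_iff]
    tauto

namespace ProbabilityTheory.HasSubgaussianMGF

variable {α : Type*} [MeasurableSpace α] {P Q : Measure α} {f : α → ℝ} {c : ℝ≥0}

lemma integrable_of_absolutelyContinuous [IsFiniteMeasure Q] [IsFiniteMeasure P]
    (hf : HasSubgaussianMGF f c P) (hQP : Q ≪ P) (hllr : Integrable (llr Q P) Q) :
    Integrable f Q :=
  integrable_of_integrable_llr_of_integrable_exp hQP hllr hf.aestronglyMeasurable
    (by simpa using hf.integrable_exp_mul 1) (by simpa using hf.integrable_exp_mul (-1))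

lemma integral_le_sqrt_integral_llr [IsProbabilityMeasure Q] [IsProbabilityMeasure P]
    (hf : HasSubgaussianMGF f c P) (hQP : Q ≪ P) (hllr : Integrable (llr Q P) Q) :
    ∫ x, f x ∂Q ≤ √(2 * c * ∫ x, llr Q P x ∂Q) := by
  refine le_sqrt_of_forall_mul_le_add_sq c.2 fun t _ => ?_
  have hDV := integral_le_integral_llr_add_log_integral_exp hQP hllr
    ((hf.integrable_of_absolutelyContinuous hQP hllr).const_mul t) (hf.integrable_exp_mul t)
  rw [integral_const_mul] at hDV
  exact hDV.trans (add_le_add_right (hf.cgf_le t) _)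

lemma prod_of_forall {β : Type*} [MeasurableSpace β] {ρ : Measure α} {ν : Measure β}
    [IsProbabilityMeasure ρ] [SFinite ν] {f : α × β → ℝ} (hf : Measurable f)
    (h : ∀ a, HasSubgaussianMGF (fun b => f (a, b)) c ν) :
    HasSubgaussianMGF f c (ρ.prod ν) := by
  have hexp_meas (t : ℝ) : Measurable fun p => exp (t * f p) := (hf.const_mul t).exp
  have hint (t : ℝ) : Integrable (fun p => exp (t * f p)) (ρ.prod ν) := by
    refine (integrable_prod_iff (hexp_meas t).aestronglyMeasurable).2
      ⟨ae_of_all _ fun a => (h a).integrable_exp_mul t, ?_⟩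
    refine Integrable.mono' (integrable_const (exp (c * t ^ 2 / 2)))
      (hexp_meas t).norm.stronglyMeasurable.integral_prod_right'.aestronglyMeasurable
      (ae_of_all _ fun a => ?_)
    simp only [Real.norm_eq_abs, abs_exp]
    rw [abs_of_nonneg (integral_nonneg fun _ => (exp_pos _).le)]
    exact (h a).mgf_le t
  refine ⟨hint, fun t => ?_⟩
  calc mgf f (ρ.prod ν) t = ∫ a, mgf (fun b => f (a, b)) ν t ∂ρ := integral_prod _ (hint t)
    _ ≤ ∫ _, exp (c * t ^ 2 / 2) ∂ρ :=
      integral_mono (hint t).integral_prod_left (integrable_const _) fun a => (h a).mgf_le t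
    _ = exp (c * t ^ 2 / 2) := by simp

lemma pi_average {Z : Type*} [MeasurableSpace Z] {D : Measure Z} [IsProbabilityMeasure D]
    {X : Z → ℝ} (hX : HasSubgaussianMGF X c D) (N : ℕ) :
    HasSubgaussianMGF (fun s : Fin N → Z => (N : ℝ)⁻¹ * ∑ k, X (s k)) (c / N)
      (Measure.pi fun _ => D) := by
  have hcoord (k : Fin N) : HasSubgaussianMGF (fun s : Fin N → Z => X (s k)) c
      (Measure.pi fun _ => D) :=
    .of_map (measurable_pi_apply k).aemeasurable <| by
      rwa [(measurePreserving_eval (fun _ => D) k).map_eq]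
  have hsum := (sum_of_iIndepFun (s := Finset.univ) (iIndepFun_pi fun _ => hX.aemeasurable)
    fun k _ => hcoord k).const_mul (N : ℝ)⁻¹
  convert hsum using 1
  rw [← NNReal.coe_inj, NNReal.coe_div]
  change (c : ℝ) / N = (N : ℝ)⁻¹ ^ 2 * ((∑ _k : Fin N, c : ℝ≥0) : ℝ)
  rcases N.eq_zero_or_pos with rfl | hN
  · simp
  · simp
    field_simp

end ProbabilityTheory.HasSubgaussianMGF

lemma MeasureTheory.Measure.pi_map_comp_of_injective {ι κ Z : Type*} [Fintype ι] [Fintype κ]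
    [MeasurableSpace Z] (D : Measure Z) [IsProbabilityMeasure D] {e : κ → ι}
    (he : Function.Injective e) :
    (Measure.pi fun _ : ι => D).map (fun s => s ∘ e) = Measure.pi fun _ : κ => D := by
  have hindep := (iIndepFun_pi (μ := fun _ : ι => D) (X := fun _ => id)
    fun _ => aemeasurable_id).precomp he
  rw [show (fun s : ι → Z => s ∘ e) = fun s k => s (e k) from rfl,
    hindep.map_fun_eq_pi_map fun k => (measurable_pi_apply (e k)).aemeasurable]
  congr with k : 1
  exact (measurePreserving_eval (fun _ => D) (e k)).map_eq

namespace ProbabilityTheory.IndepFun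

variable {Ω α β : Type*} [MeasurableSpace Ω] [MeasurableSpace α] [MeasurableSpace β]
  {μ : Measure Ω} [IsProbabilityMeasure μ] {X : Ω → α} {Y : Ω → β}

lemma map_comp_prodMk_eq {γ : Type*} [MeasurableSpace γ] (hXY : IndepFun X Y μ)
    (hX : Measurable X) (hY : Measurable Y) {φ : α × β → γ} (hφ : Measurable φ) {ν : Measure γ}
    (h : ∀ y, (μ.map X).map (fun x => φ (x, y)) = ν) :
    μ.map (fun ω => φ (X ω, Y ω)) = ν := by
  have hprod := (indepFun_iff_map_prod_eq_prod_map_map hX.aemeasurable hY.aemeasurable).1 hXY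
  ext E hE
  have hslice (y : β) : (μ.map X) ((fun x => (x, y)) ⁻¹' (φ ⁻¹' E)) = ν E := by
    rw [← h y, Measure.map_apply (by fun_prop) hE]
    rfl
  rw [← Function.comp_def φ, ← Measure.map_map hφ (hX.prodMk hY), hprod, Measure.map_apply hφ hE,
    Measure.prod_apply_symm (hφ hE)]
  simp_rw [hslice]
  rw [lintegral_const, Measure.map_apply hY .univ, Set.preimage_univ, measure_univ, mul_one]

lemma integral_comp_prodMk (hXY : IndepFun X Y μ) (hX : Measurable X) (hY : Measurable Y)
    {G : α × β → ℝ} (hG : Measurable G) (hint : Integrable (fun ω => G (X ω, Y ω)) μ) :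
    ∫ ω, G (X ω, Y ω) ∂μ = ∫ x, ∫ y, G (x, y) ∂(μ.map Y) ∂(μ.map X) := by
  have hprod := (indepFun_iff_map_prod_eq_prod_map_map hX.aemeasurable hY.aemeasurable).1 hXY
  have hint' : Integrable G ((μ.map X).prod (μ.map Y)) := by
    rwa [← hprod, integrable_map_measure hG.aestronglyMeasurable (hX.prodMk hY).aemeasurable]
  rw [← integral_map (hX.prodMk hY).aemeasurable hG.aestronglyMeasurable, hprod,
    integral_prod _ hint']

end ProbabilityTheory.IndepFun

lemma PMF.integral_uniformOfFinset {α : Type*} [Fintype α] [MeasurableSpace α]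
    [MeasurableSingletonClass α] {s : Finset α} (hs : s.Nonempty) (f : α → ℝ) :
    ∫ a, f a ∂(PMF.uniformOfFinset s hs).toMeasure = (s.card : ℝ)⁻¹ * ∑ a ∈ s, f a := by
  rw [PMF.integral_eq_sum, Finset.mul_sum, ← Finset.sum_subset (Finset.subset_univ s)]
  · refine Finset.sum_congr rfl fun a ha => ?_
    simp [PMF.uniformOfFinset_apply, ha]
  · intro a _ ha
    simp [PMF.uniformOfFinset_apply, ha]

lemma Finset.sum_powersetCard_sum_compl {α M : Type*} [Fintype α] [DecidableEq α]
    [AddCommMonoid M] (m : ℕ) (x : α → M) :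
    ∑ A ∈ powersetCard m univ, ∑ i ∈ Aᶜ, x i
      = (Fintype.card α - 1).choose m • ∑ i, x i := by
  have hcount (i : α) : ({A ∈ powersetCard m univ | i ∈ Aᶜ} : Finset (Finset α))
      = powersetCard m (univ.erase i) := by
    ext A
    simp only [mem_filter, mem_powersetCard, mem_compl, subset_erase, subset_univ, true_and]
    tauto
  calc ∑ A ∈ powersetCard m univ, ∑ i ∈ Aᶜ, x i
      = ∑ A ∈ powersetCard m univ, ∑ i, if i ∈ Aᶜ then x i else 0 := by
        simp_rw [sum_ite_mem, univ_inter]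
    _ = ∑ i, ∑ A ∈ {A ∈ powersetCard m univ | i ∈ Aᶜ}, x i := by
        rw [sum_comm]; simp_rw [sum_filter]
    _ = (Fintype.card α - 1).choose m • ∑ i, x i := by
        simp_rw [hcount, sum_const, card_powersetCard, card_erase_of_mem (mem_univ _), card_univ,
          smul_sum]

/-- The `n - m` indices outside `A`, in increasing order when `#A = m` (and an arbitrary
injection otherwise). -/
noncomputable def complIndex {n : ℕ} (m : ℕ) (A : Finset (Fin n)) : Fin (n - m) → Fin n :=
  if h : Aᶜ.card = n - m then fun k => Aᶜ.orderIsoOfFin h k else Fin.castLE (Nat.sub_le n m)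

lemma complIndex_injective {n : ℕ} (m : ℕ) (A : Finset (Fin n)) :
    Function.Injective (complIndex m A) := by
  unfold complIndex
  split_ifs with h
  · exact Subtype.val_injective.comp (Aᶜ.orderIsoOfFin h).injective
  · exact Fin.castLE_injective _

lemma complIndex_of_card_eq {n m : ℕ} {A : Finset (Fin n)} (hA : A.card = m) (k : Fin (n - m)) :
    complIndex m A k = Aᶜ.orderIsoOfFin (by simp [Finset.card_compl, hA]) k := by
  rw [complIndex, dif_pos]

lemma sum_complIndex {M : Type*} [AddCommMonoid M] {n m : ℕ} {A : Finset (Fin n)}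
    (hA : A.card = m) (x : Fin n → M) :
    ∑ k, x (complIndex m A k) = ∑ i ∈ Aᶜ, x i := by
  have hAc : Aᶜ.card = n - m := by simp [Finset.card_compl, hA]
  simp_rw [complIndex_of_card_eq hA]
  rw [← Finset.sum_coe_sort Aᶜ x]
  exact Fintype.sum_equiv (Aᶜ.orderIsoOfFin hAc).toEquiv _ _ fun _ => rfl

noncomputable def empiricalRisk {𝒵 𝒲 : Type*} (ℓ : 𝒵 → 𝒲 → ℝ) {N : ℕ} (s : Fin N → 𝒵)
    (w : 𝒲) : ℝ :=
  (N : ℝ)⁻¹ * ∑ k, ℓ (s k) w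

lemma integral_empiricalRisk_comp_complIndex {𝒵 𝒲 : Type*} (ℓ : 𝒵 → 𝒲 → ℝ) {n m : ℕ}
    (hm : m < n) (h : (Finset.powersetCard m (Finset.univ : Finset (Fin n))).Nonempty)
    (s : Fin n → 𝒵) (w : 𝒲) :
    ∫ A, empiricalRisk ℓ (s ∘ complIndex m A) w
        ∂(PMF.uniformOfFinset (Finset.powersetCard m Finset.univ) h).toMeasure
      = empiricalRisk ℓ s w := by
  have hsum : ∑ A ∈ Finset.powersetCard m Finset.univ, ∑ k, ℓ (s (complIndex m A k)) w
      = ((n - 1).choose m : ℝ) * ∑ i, ℓ (s i) w := by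
    rw [Finset.sum_congr rfl fun A hA =>
        sum_complIndex (Finset.mem_powersetCard.1 hA).2 fun i => ℓ (s i) w,
      Finset.sum_powersetCard_sum_compl, Fintype.card_fin, nsmul_eq_mul]
  simp only [empiricalRisk, Function.comp_apply]
  rw [PMF.integral_uniformOfFinset, ← Finset.mul_sum, hsum, Finset.card_powersetCard,
    Finset.card_univ, Fintype.card_fin]
  have hchoose : ((n - 1).choose m : ℝ) * n = n.choose m * (n - m : ℕ) := by
    have := Nat.choose_mul_succ_eq (n - 1) m
    rw [Nat.sub_add_cancel (by omega)] at this
    exact_mod_cast this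
  have hn : (n : ℝ) ≠ 0 := Nat.cast_ne_zero.2 (by omega)
  have hnm : ((n - m : ℕ) : ℝ) ≠ 0 := Nat.cast_ne_zero.2 (by omega)
  have hc : (n.choose m : ℝ) ≠ 0 := Nat.cast_ne_zero.2 (Nat.choose_pos hm.le).ne'
  field_simp
  linear_combination (∑ i, ℓ (s i) w) * hchoose

section EmpiricalRisk

variable {𝒵 𝒲 : Type*} [MeasurableSpace 𝒵] {ℓ : 𝒵 → 𝒲 → ℝ}

lemma measurable_empiricalRisk [MeasurableSpace 𝒲] (hℓ : Measurable fun p : 𝒵 × 𝒲 => ℓ p.1 p.2)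
    (N : ℕ) :
    Measurable fun p : (Fin N → 𝒵) × 𝒲 => empiricalRisk ℓ p.1 p.2 :=
  measurable_const.mul <| Finset.measurable_sum _ fun k _ =>
    hℓ.comp (f := fun p : (Fin N → 𝒵) × 𝒲 => (p.1 k, p.2)) (by fun_prop)

lemma hasSubgaussianMGF_integral_sub_empiricalRisk {D : Measure 𝒵} [IsProbabilityMeasure D]
    {w : 𝒲} {c : ℝ≥0} {N : ℕ} (hN : N ≠ 0)
    (h : HasSubgaussianMGF (fun z => ℓ z w - ∫ z', ℓ z' w ∂D) c D) :
    HasSubgaussianMGF (fun s : Fin N → 𝒵 => (∫ z, ℓ z w ∂D) - empiricalRisk ℓ s w) (c / N)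
      (Measure.pi fun _ => D) := by
  refine (h.pi_average N).neg.congr (ae_of_all _ fun s => ?_)
  have : (N : ℝ) ≠ 0 := Nat.cast_ne_zero.2 hN
  simp only [Pi.neg_apply, empiricalRisk, Finset.sum_sub_distrib, Finset.sum_const,
    Finset.card_univ, Fintype.card_fin, nsmul_eq_mul]
  field_simp
  ring

lemma measurable_comp_complIndex {n : ℕ} (m : ℕ) :
    Measurable fun p : (Fin n → 𝒵) × Finset (Fin n) => p.1 ∘ complIndex m p.2 :=
  measurable_from_prod_countable_left fun A =>
    measurable_pi_lambda _ fun k => measurable_pi_apply (complIndex m A k)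

lemma hasSubgaussianMGF_integral_sub_empiricalRisk_prod [MeasurableSpace 𝒲] {ρ : Measure 𝒲}
    [IsProbabilityMeasure ρ] {D : Measure 𝒵} [IsProbabilityMeasure D]
    (hℓ : Measurable fun p : 𝒵 × 𝒲 => ℓ p.1 p.2) {c : ℝ≥0} {N : ℕ} (hN : N ≠ 0)
    (h : ∀ w, HasSubgaussianMGF (fun z => ℓ z w - ∫ z', ℓ z' w ∂D) c D) :
    HasSubgaussianMGF (fun p : 𝒲 × (Fin N → 𝒵) => (∫ z, ℓ z p.1 ∂D) - empiricalRisk ℓ p.2 p.1)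
      (c / N) (ρ.prod (Measure.pi fun _ => D)) :=
  .prod_of_forall
    (((hℓ.comp measurable_swap).stronglyMeasurable.integral_prod_right'.measurable.comp
      measurable_fst).sub ((measurable_empiricalRisk hℓ _).comp measurable_swap))
    fun w => hasSubgaussianMGF_integral_sub_empiricalRisk hN (h w)

section Subsample

variable {Ω : Type*} [MeasurableSpace Ω] {μ : Measure Ω} [IsProbabilityMeasure μ] {n m : ℕ}
  {S : Ω → Fin n → 𝒵} {J : Ω → Finset (Fin n)}

lemma map_comp_complIndex_eq_pi (hS : Measurable S) (hJ : Measurable J) (hSJ : IndepFun S J μ)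
    {D : Measure 𝒵} [IsProbabilityMeasure D] (hSD : μ.map S = Measure.pi fun _ => D) :
    μ.map (fun ω => S ω ∘ complIndex m (J ω)) = Measure.pi fun _ => D :=
  hSJ.map_comp_prodMk_eq hS hJ (measurable_comp_complIndex m) fun A => by
    rw [hSD, Measure.pi_map_comp_of_injective D (complIndex_injective m A)]

lemma integral_sub_empiricalRisk_eq_subsample [MeasurableSpace 𝒲] (hm : m < n) {W : Ω → 𝒲}
    (hS : Measurable S) (hW : Measurable W) (hJ : Measurable J)
    {h : (Finset.powersetCard m (Finset.univ : Finset (Fin n))).Nonempty}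
    (hJunif : μ.map J = (PMF.uniformOfFinset (Finset.powersetCard m Finset.univ) h).toMeasure)
    (hindep : IndepFun (fun ω => (S ω, W ω)) J μ) (hℓ : Measurable fun p : 𝒵 × 𝒲 => ℓ p.1 p.2)
    {R : 𝒲 → ℝ} (hint : Integrable (fun ω => R (W ω) - empiricalRisk ℓ (S ω) (W ω)) μ)
    (hint_sub : Integrable
      (fun ω => R (W ω) - empiricalRisk ℓ (S ω ∘ complIndex m (J ω)) (W ω)) μ) :
    ∫ ω, (R (W ω) - empiricalRisk ℓ (S ω) (W ω)) ∂μ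
      = ∫ ω, (R (W ω) - empiricalRisk ℓ (S ω ∘ complIndex m (J ω)) (W ω)) ∂μ := by
  set G : ((Fin n → 𝒵) × 𝒲) × Finset (Fin n) → ℝ := fun q =>
    empiricalRisk ℓ (q.1.1 ∘ complIndex m q.2) q.1.2 - empiricalRisk ℓ q.1.1 q.1.2
  have hG : Measurable G := measurable_from_prod_countable_left fun A =>
    ((measurable_empiricalRisk hℓ _).comp
      (f := fun p : (Fin n → 𝒵) × 𝒲 => (p.1 ∘ complIndex m A, p.2)) (by fun_prop)).sub
      (measurable_empiricalRisk hℓ n)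
  rw [← sub_eq_zero, ← integral_sub hint hint_sub]
  calc _ = ∫ ω, G ((S ω, W ω), J ω) ∂μ := integral_congr_ae (ae_of_all _ fun ω => by simp [G])
    _ = ∫ x, ∫ A, G (x, A) ∂(μ.map J) ∂(μ.map fun ω => (S ω, W ω)) :=
      hindep.integral_comp_prodMk (hS.prodMk hW) hJ hG
        ((hint.sub hint_sub).congr (ae_of_all _ fun ω => by simp [G]))
    _ = 0 := by
      refine integral_eq_zero_of_ae (ae_of_all _ fun x => ?_)
      simp only [G, Pi.zero_apply]
      rw [hJunif, integral_sub .of_finite .of_finite, integral_empiricalRisk_comp_complIndex ℓ hm,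
        integral_const, probReal_univ, one_smul, sub_self]

end Subsample

end EmpiricalRisk

/-- Data-dependent mutual information generalization bound (Theorem 1 of the paper):
with `S ~ D^n` i.i.d., `J ⊆ [n]` a uniformly random subset of size `m` independent of
`(S, W)`, and `ℓ(Z, w)` `σ`-subgaussian for each `w`,
`𝔼[R_D(W) - R̂_S(W)] ≤ √((2σ²/(n-m)) · I(W; S_{Jᶜ}))`, where `S_{Jᶜ}` is the tuple of the
`n - m` data points with indices outside `J` (listed in increasing index order), and
`MI` is any real upper bound on the mutual information `I(W; S_{Jᶜ})`. -/
theorem data_dependent_mutual_information_bound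
    {Ω 𝒵 𝒲 : Type*} [MeasurableSpace Ω] [MeasurableSpace 𝒵] [MeasurableSpace 𝒲]
    (μ : Measure Ω) [IsProbabilityMeasure μ]
    (D : Measure 𝒵) [IsProbabilityMeasure D]
    (n m : ℕ) (hm : m < n) (Z : Fin n → Ω → 𝒵) (hZ : ∀ i, Measurable (Z i))
    (hiid : μ.map (fun ω i => Z i ω) = Measure.pi (fun _ : Fin n => D))
    (W : Ω → 𝒲) (hW : Measurable W)
    (J : Ω → Finset (Fin n)) (hJmeas : Measurable J)
    (hJcard : ∀ ω, (J ω).card = m)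
    (hJunif : μ.map J = (PMF.uniformOfFinset (Finset.powersetCard m Finset.univ)
      ((Finset.powersetCard_nonempty (s := (Finset.univ : Finset (Fin n)))).mpr (by simpa using hm.le))).toMeasure)
    (hJindep : IndepFun (fun ω => ((fun i => Z i ω), W ω)) J μ)
    (SJc : Ω → Fin (n - m) → 𝒵)
    (hSJc : ∀ ω k, SJc ω k =
      Z ((((J ω)ᶜ).orderIsoOfFin (by simp [Finset.card_compl, hJcard ω]) k : Fin n)) ω)
    (ℓ : 𝒵 → 𝒲 → ℝ) (hℓ : Measurable (fun p : 𝒵 × 𝒲 => ℓ p.1 p.2))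
    (σ : ℝ)
    (hSGint : ∀ (w : 𝒲) (lam : ℝ),
      Integrable (fun z => exp (lam * (ℓ z w - ∫ z', ℓ z' w ∂D))) D)
    (hSG : ∀ (w : 𝒲) (lam : ℝ),
      ∫ z, exp (lam * (ℓ z w - ∫ z', ℓ z' w ∂D)) ∂D ≤ exp (lam ^ 2 * σ ^ 2 / 2))
    (hGenInt : Integrable
      (fun ω => (∫ z, ℓ z (W ω) ∂D) - (n : ℝ)⁻¹ * ∑ i, ℓ (Z i ω) (W ω)) μ)
    (MI : ℝ)
    (hMI : klDiv (μ.map (fun ω => (W ω, SJc ω)))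
        ((μ.map W).prod (μ.map SJc)) ≤ (MI : EReal)) :
    ∫ ω, ((∫ z, ℓ z (W ω) ∂D) - (n : ℝ)⁻¹ * ∑ i, ℓ (Z i ω) (W ω)) ∂μ
      ≤ Real.sqrt (2 * σ ^ 2 / ((n : ℝ) - m) * MI) := by
  obtain ⟨hQP, hllr, hKL⟩ := klDiv_le_coe_iff.1 hMI
  set S : Ω → Fin n → 𝒵 := fun ω i => Z i ω
  have hS : Measurable S := measurable_pi_lambda _ hZ
  have hSJc_eq : SJc = fun ω => S ω ∘ complIndex m (J ω) := by
    funext ω k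
    rw [hSJc, Function.comp_apply, complIndex_of_card_eq (hJcard ω)]
  have hSJc_meas : Measurable SJc :=
    hSJc_eq ▸ (measurable_comp_complIndex m).comp (hS.prodMk hJmeas)
  have hWS : Measurable fun ω => (W ω, SJc ω) := hW.prodMk hSJc_meas
  have := Measure.isProbabilityMeasure_map (μ := μ) hW.aemeasurable
  have := Measure.isProbabilityMeasure_map (μ := μ) hSJc_meas.aemeasurable
  have := Measure.isProbabilityMeasure_map (μ := μ) hWS.aemeasurable
  set f : 𝒲 × (Fin (n - m) → 𝒵) → ℝ := fun p => (∫ z, ℓ z p.1 ∂D) - empiricalRisk ℓ p.2 p.1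
  have hf : HasSubgaussianMGF f ((σ ^ 2).toNNReal / (n - m : ℕ))
      ((μ.map W).prod (μ.map SJc)) := by
    rw [hSJc_eq,
      map_comp_complIndex_eq_pi hS hJmeas (hJindep.comp measurable_fst measurable_id) hiid]
    refine hasSubgaussianMGF_integral_sub_empiricalRisk_prod hℓ (by omega)
      fun w => ⟨hSGint w, fun t => ?_⟩
    rw [Real.coe_toNNReal _ (sq_nonneg σ), mul_comm]
    exact hSG w t
  have hfQ := hf.integrable_of_absolutelyContinuous hQP hllr
  have hfμ := (integrable_map_measure hfQ.aestronglyMeasurable hWS.aemeasurable).1 hfQ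
  have hgap : ∫ ω, ((∫ z, ℓ z (W ω) ∂D) - (n : ℝ)⁻¹ * ∑ i, ℓ (Z i ω) (W ω)) ∂μ
      = ∫ p, f p ∂(μ.map fun ω => (W ω, SJc ω)) := by
    rw [integral_map hWS.aemeasurable hfQ.aestronglyMeasurable]
    rw [hSJc_eq] at hfμ ⊢
    exact integral_sub_empiricalRisk_eq_subsample (R := fun w => ∫ z, ℓ z w ∂D) hm hS hW hJmeas
      hJunif hJindep hℓ hGenInt hfμ
  rw [hgap]
  refine (hf.integral_le_sqrt_integral_llr hQP hllr).trans ?_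
  rw [NNReal.coe_div, Real.coe_toNNReal _ (sq_nonneg σ), NNReal.coe_natCast, Nat.cast_sub hm.le,
    ← mul_div_assoc]
  have : (0 : ℝ) < n - m := by rw [sub_pos]; exact_mod_cast hm
  gcongr
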